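/- arXiv:2111.08477 — 3 statements merged into one kernel-verified Lean document; each statement's English description precedes it below -/
import Mathlib

section
/- Let p, q ∈ (0, 1/2). Then H(p ⊛ q) < H(p) + H(q), where p ⊛ q := p(1-q) + (1-p)q. In particular, for 0 < γ < δ < 1/2 with κ := (δ-γ)/(1-2γ), one has H(δ) - H(κ) < H(γ), i.e., the REC commitment capacity is strictly less than the EC commitment capacity H(γ). -/
/-- Binary entropy function (base 2). -/
noncomputable def binEnt (p : ℝ) : ℝ := -p * Real.logb 2 p - (1 - p) * Real.logb 2 (1 - p)

/-!
For independent `X ~ Bern(p)` and `Y ~ Bern(q)`, the chain rule gives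
`H(p) + H(q) = H(X, Y) = H(X ⊕ Y) + H(X | X ⊕ Y)`, and `X ⊕ Y ~ Bern(p ⊛ q)`.
For `p, q ∈ (0, 1)` both conditional laws of `X` given `X ⊕ Y` are nondegenerate, so
`H(X | X ⊕ Y) > 0`. The capacity statement is the case `p = γ`, `q = κ`, since `γ ⊛ κ = δ`.
-/

/-- `p ⊛ q`, the law of the XOR of independent `Bern(p)` and `Bern(q)`. -/
def binConv (p q : ℝ) : ℝ := p * (1 - q) + (1 - p) * q

lemma one_sub_binConv (p q : ℝ) : 1 - binConv p q = p * q + (1 - p) * (1 - q) := by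
  unfold binConv; ring

lemma binConv_sub_div_one_sub_two_mul {γ δ : ℝ} (hγ : 1 - 2 * γ ≠ 0) :
    binConv γ ((δ - γ) / (1 - 2 * γ)) = δ := by
  unfold binConv
  linear_combination div_mul_cancel₀ (δ - γ) hγ

lemma binEnt_pos {t : ℝ} (h0 : 0 < t) (h1 : t < 1) : 0 < binEnt t := by
  have l0 : Real.logb 2 t < 0 := Real.logb_neg one_lt_two h0 h1
  have l1 : Real.logb 2 (1 - t) < 0 := Real.logb_neg one_lt_two (by linarith) (by linarith)
  unfold binEnt
  nlinarith

lemma add_mul_binEnt_div_add {x y : ℝ} (hx : x ≠ 0) (hy : y ≠ 0) (hxy : x + y ≠ 0) :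
    (x + y) * binEnt (x / (x + y)) =
      -x * Real.logb 2 x - y * Real.logb 2 y + (x + y) * Real.logb 2 (x + y) := by
  have h1 : 1 - x / (x + y) = y / (x + y) := by field_simp; ring
  unfold binEnt
  rw [h1, Real.logb_div hx hxy, Real.logb_div hy hxy]
  field_simp
  ring

lemma binEnt_add_binEnt_eq {p q : ℝ} (hp0 : p ≠ 0) (hp1 : 1 - p ≠ 0) (hq0 : q ≠ 0)
    (hq1 : 1 - q ≠ 0) (hpq0 : binConv p q ≠ 0) (hpq1 : 1 - binConv p q ≠ 0) :
    binEnt p + binEnt q = binEnt (binConv p q) +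
      binConv p q * binEnt (p * (1 - q) / binConv p q) +
      (1 - binConv p q) * binEnt (p * q / (1 - binConv p q)) := by
  have grouped_odd := add_mul_binEnt_div_add (mul_ne_zero hp0 hq1) (mul_ne_zero hp1 hq0) hpq0
  have grouped_even := add_mul_binEnt_div_add (mul_ne_zero hp0 hq0) (mul_ne_zero hp1 hq1)
    (one_sub_binConv p q ▸ hpq1)
  have complement : 1 - (p * (1 - q) + (1 - p) * q) = p * q + (1 - p) * (1 - q) :=
    one_sub_binConv p q
  rw [one_sub_binConv, binConv, grouped_odd, grouped_even]
  unfold binEnt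
  rw [complement, Real.logb_mul hp0 hq1, Real.logb_mul hp1 hq0, Real.logb_mul hp0 hq0,
    Real.logb_mul hp1 hq1]
  ring

theorem binEnt_binConv_lt {p q : ℝ} (hp0 : 0 < p) (hp1 : p < 1) (hq0 : 0 < q) (hq1 : q < 1) :
    binEnt (binConv p q) < binEnt p + binEnt q := by
  have hpq0 : 0 < binConv p q := by unfold binConv; positivity
  have hpq1 : 0 < 1 - binConv p q := by rw [one_sub_binConv]; positivity
  have odd_pos : 0 < binConv p q * binEnt (p * (1 - q) / binConv p q) := by
    refine mul_pos hpq0 (binEnt_pos (by positivity) ?_)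
    rw [div_lt_one hpq0, binConv]
    nlinarith
  have even_pos : 0 < (1 - binConv p q) * binEnt (p * q / (1 - binConv p q)) := by
    refine mul_pos hpq1 (binEnt_pos (by positivity) ?_)
    rw [div_lt_one hpq1, one_sub_binConv]
    nlinarith
  rw [binEnt_add_binEnt_eq hp0.ne' (sub_ne_zero.2 hp1.ne') hq0.ne' (sub_ne_zero.2 hq1.ne')
    hpq0.ne' hpq1.ne']
  linarith

/-- H(p ⊛ q) < H(p) + H(q) for p,q ∈ (0,1/2); in particular the REC capacity is
strictly less than the EC capacity H(γ). -/
theorem stmt_5 :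
    (∀ p q : ℝ, 0 < p → p < 1/2 → 0 < q → q < 1/2 →
      binEnt (p * (1 - q) + (1 - p) * q) < binEnt p + binEnt q) ∧
    (∀ γ δ : ℝ, 0 < γ → γ < δ → δ < 1/2 →
      binEnt δ - binEnt ((δ - γ) / (1 - 2*γ)) < binEnt γ) := by
  refine ⟨fun p q hp0 hp1 hq0 hq1 => binEnt_binConv_lt hp0 (by linarith) hq0 (by linarith), ?_⟩
  intro γ δ hγ hγδ hδ
  have h2γ : 0 < 1 - 2 * γ := by linarith
  have hκ0 : 0 < (δ - γ) / (1 - 2 * γ) := div_pos (by linarith) h2γ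
  have hκ1 : (δ - γ) / (1 - 2 * γ) < 1 := by rw [div_lt_one h2γ]; linarith
  have := binEnt_binConv_lt hγ (by linarith) hκ0 hκ1
  rw [binConv_sub_div_one_sub_two_mul h2γ.ne'] at this
  linarith
end

section
/- Fix 0 < δ < 1/2 and define, for γ ∈ (0, δ), the gap Ω(γ) := H(γ) - H(δ) + H((δ - γ)/(1 - 2γ)), where H is the binary entropy function. Then Ω(γ) > 0 for all γ ∈ (0, δ). -/
open Real Set

lemma binEnt_eq_binEntropy_div_log_two (p : ℝ) : binEnt p = binEntropy p / log 2 := by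
  unfold binEnt binEntropy logb
  rw [log_inv, log_inv]
  ring

lemma log_one_sub_sub_log_lt {s t : ℝ} (ht : 0 < t) (hts : t < s) (hs : s < 1) :
    log (1 - s) - log s < log (1 - t) - log t := by
  have h₁ : log (1 - s) < log (1 - t) := log_lt_log (by linarith) (by linarith)
  have h₂ : log t < log s := log_lt_log ht hts
  linarith

lemma log_one_sub_sub_log_nonneg {s : ℝ} (hs : 0 < s) (hs' : s ≤ 1 / 2) :
    0 ≤ log (1 - s) - log s :=
  sub_nonneg.2 (log_le_log hs (by linarith))

lemma binEntropy_conv_lt_add_of_le_half {γ κ : ℝ} (hγ : 0 < γ) (hγ' : γ ≤ 1 / 2)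
    (hκ : 0 < κ) (hκ' : κ ≤ 1 / 2) :
    binEntropy (γ * (1 - κ) + (1 - γ) * κ) < binEntropy γ + binEntropy κ := by
  set g : ℝ → ℝ := fun t ↦ binEntropy γ + binEntropy t - binEntropy (γ * (1 - t) + (1 - γ) * t)
  have hmono : StrictMonoOn g (Icc 0 κ) := by
    refine strictMonoOn_of_deriv_pos (convex_Icc 0 κ) (by fun_prop) fun t ht ↦ ?_
    rw [interior_Icc] at ht
    obtain ⟨ht₀, htκ⟩ := ht
    set s := γ * (1 - t) + (1 - γ) * t
    have hts : t < s := by nlinarith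
    have hs : s ≤ 1 / 2 := by nlinarith
    have hconv : HasDerivAt (fun t ↦ γ * (1 - t) + (1 - γ) * t) (1 - 2 * γ) t := by
      refine ((((hasDerivAt_id' t).const_sub 1).const_mul γ).add
        ((hasDerivAt_id' t).const_mul (1 - γ))).congr_deriv ?_
      ring
    have hg : HasDerivAt g
        (log (1 - t) - log t - (log (1 - s) - log s) * (1 - 2 * γ)) t :=
      ((hasDerivAt_binEntropy (by linarith) (by linarith)).const_add _).sub
        ((hasDerivAt_binEntropy (by linarith) (by linarith)).comp t hconv)
    rw [hg.deriv]
    have hφ := log_one_sub_sub_log_lt ht₀ hts (by linarith)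
    have hφs := log_one_sub_sub_log_nonneg (by linarith) hs
    nlinarith
  have h := hmono (left_mem_Icc.2 hκ.le) (right_mem_Icc.2 hκ.le) hκ
  simp only [g, binEntropy_zero, sub_zero, mul_one, mul_zero, add_zero, sub_self] at h
  linarith

theorem binEntropy_conv_lt_add {γ κ : ℝ} (hγ : γ ∈ Ioo 0 1) (hκ : κ ∈ Ioo 0 1) :
    binEntropy (γ * (1 - κ) + (1 - γ) * κ) < binEntropy γ + binEntropy κ := by
  wlog hγ' : γ ≤ 1 / 2 generalizing γ κ
  · have h := this (γ := 1 - γ) ⟨by linarith [hγ.2], by linarith [hγ.1]⟩ hκ (by linarith)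
    rwa [binEntropy_one_sub, ← binEntropy_one_sub, show
      1 - ((1 - γ) * (1 - κ) + (1 - (1 - γ)) * κ) = γ * (1 - κ) + (1 - γ) * κ by ring] at h
  wlog hκ' : κ ≤ 1 / 2 generalizing κ
  · have h := this (κ := 1 - κ) ⟨by linarith [hκ.2], by linarith [hκ.1]⟩ (by linarith)
    rwa [binEntropy_one_sub, ← binEntropy_one_sub, show
      1 - (γ * (1 - (1 - κ)) + (1 - γ) * (1 - κ)) = γ * (1 - κ) + (1 - γ) * κ by ring] at h
  exact binEntropy_conv_lt_add_of_le_half hγ.1 hγ' hκ.1 hκ'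

theorem stmt_7_general (δ : ℝ) (h2 : δ < 1/2) :
    ∀ γ : ℝ, 0 < γ → γ < δ →
      0 < binEnt γ - binEnt δ + binEnt ((δ - γ) / (1 - 2*γ)) := by
  intro γ hγ hγδ
  have hden : 0 < 1 - 2 * γ := by linarith
  set κ := (δ - γ) / (1 - 2 * γ)
  have hκ : κ ∈ Ioo 0 1 := ⟨div_pos (by linarith) hden, (div_lt_one hden).2 (by linarith)⟩
  have hδ : γ * (1 - κ) + (1 - γ) * κ = δ := by
    have : κ * (1 - 2 * γ) = δ - γ := div_mul_cancel₀ _ hden.ne'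
    linarith
  have hsub := binEntropy_conv_lt_add ⟨hγ, by linarith⟩ hκ
  rw [hδ] at hsub
  simp only [binEnt_eq_binEntropy_div_log_two]
  rw [div_sub_div_same, ← add_div]
  exact div_pos (by linarith) (log_pos one_lt_two)

/-- With 0 < δ < 1/2 fixed, the capacity gap Ω(γ) = H(γ) - H(δ) + H((δ-γ)/(1-2γ))
is strictly positive for all γ ∈ (0, δ). -/
theorem stmt_7 (δ : ℝ) (h0 : 0 < δ) (h2 : δ < 1/2) :
    ∀ γ : ℝ, 0 < γ → γ < δ →
      0 < binEnt γ - binEnt δ + binEnt ((δ - γ) / (1 - 2*γ)) :=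
  stmt_7_general δ h2
end

section
/- (Leftover hash lemma, as used) Let 𝒢 be a 2-universal family of hash functions from a finite set 𝒲 to {0,1}^l, let G be uniform on 𝒢 and independent of the random variable W on 𝒲, and let U_l be uniform on {0,1}^l independent of G. Then the statistical distance satisfies ‖P_{G(W),G} − P_{U_l,G}‖ ≤ (1/2)·√(2^{l − H∞(W)}), where H∞(W) := −log₂ max_w P(W = w). -/
/-!
Let `q_i` be the law of `g_i(W)`, so that `(G(W), G)` has law `P(y, i) = q_i(y) / |𝒢|`. By
Cauchy–Schwarz, the `ℓ¹` distance of a distribution `P` on a finite set `X` from the uniform one is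
at most `√(|X| · ∑ P² - 1)`, so it suffices to bound the collision probability `∑ P²`. Expanding
`∑_y q_i(y)²` as a sum over pairs `(w, w')` and averaging over `i`, 2-universality bounds the
contribution of the pairs with `w ≠ w'` by `2^{-l}`, and the diagonal contributes
`∑_w P(W = w)² ≤ max_w P(W = w) = 2^{-H∞(W)}`. Hence `|X| · ∑ P² - 1 ≤ 2^l · 2^{-H∞(W)}`.
-/

open Finset

/-- The law of `f(W)` when `W` has weights `p`. -/
def fiberSum {α β R : Type*} [Fintype α] [DecidableEq β] [AddCommMonoid R]
    (f : α → β) (p : α → R) (y : β) : R :=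
  ∑ a, if f a = y then p a else 0

section
variable {α β : Type*} [Fintype α] [Fintype β] [DecidableEq β]

theorem sum_fiberSum {R : Type*} [AddCommMonoid R] (f : α → β) (p : α → R) :
    ∑ y, fiberSum f p y = ∑ a, p a := by
  unfold fiberSum
  rw [Finset.sum_comm]
  simp

theorem sum_fiberSum_sq {R : Type*} [CommSemiring R] (f : α → β) (p : α → R) :
    ∑ y, fiberSum f p y ^ 2 = ∑ a, ∑ b, if f a = f b then p a * p b else 0 := by
  simp only [fiberSum, sq, Finset.sum_mul_sum, ite_mul, mul_ite, zero_mul, mul_zero]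
  rw [Finset.sum_comm]
  refine Finset.sum_congr rfl fun a _ => ?_
  rw [Finset.sum_comm]
  refine Finset.sum_congr rfl fun b _ => ?_
  by_cases h : f a = f b <;> simp [h]
end

theorem sum_sq_le_sup'_mul_sum {α : Type*} [Fintype α] [Nonempty α] {p : α → ℝ}
    (hp : ∀ a, 0 ≤ p a) : ∑ a, p a ^ 2 ≤ univ.sup' univ_nonempty p * ∑ a, p a := by
  rw [Finset.mul_sum]
  gcongr with a
  rw [sq]
  exact mul_le_mul_of_nonneg_right (le_sup' p (mem_univ a)) (hp a)

theorem sum_abs_sub_inv_card_le_sqrt {X : Type*} [Fintype X] [Nonempty X] (P : X → ℝ)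
    (hP : ∑ x, P x = 1) :
    ∑ x, |P x - (Fintype.card X : ℝ)⁻¹| ≤ √(Fintype.card X * ∑ x, P x ^ 2 - 1) := by
  have hX : (Fintype.card X : ℝ) ≠ 0 := by positivity
  have hvar : ∑ x, (P x - (Fintype.card X : ℝ)⁻¹) ^ 2
      = ∑ x, P x ^ 2 - (Fintype.card X : ℝ)⁻¹ := by
    simp only [sub_sq, Finset.sum_add_distrib, Finset.sum_sub_distrib, ← Finset.sum_mul,
      ← Finset.mul_sum, hP]
    simp only [mul_one, inv_pow, sum_const, card_univ, nsmul_eq_mul]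
    field_simp
    ring
  apply Real.le_sqrt_of_sq_le
  calc (∑ x, |P x - (Fintype.card X : ℝ)⁻¹|) ^ 2
      ≤ Fintype.card X * ∑ x, |P x - (Fintype.card X : ℝ)⁻¹| ^ 2 := sq_sum_le_card_mul_sum_sq
    _ = Fintype.card X * ∑ x, P x ^ 2 - 1 := by
      simp only [sq_abs, hvar]
      field_simp

theorem sum_sum_fiberSum_sq_le {ι α β : Type*} [Fintype ι] [Nonempty ι] [Fintype α] [Fintype β]
    [DecidableEq α] [DecidableEq β] (g : ι → α → β) {ε : ℝ} (hε : 0 ≤ ε)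
    (huniv : ∀ a b : α, a ≠ b →
      ((univ.filter fun i : ι => g i a = g i b).card : ℝ) / (Fintype.card ι : ℝ) ≤ ε)
    {p : α → ℝ} (hp : ∀ a, 0 ≤ p a) :
    ∑ i, ∑ y, fiberSum (g i) p y ^ 2
      ≤ Fintype.card ι * (ε * (∑ a, p a) ^ 2 + ∑ a, p a ^ 2) := by
  set N : ℝ := (Fintype.card ι : ℝ) with hN
  have hcollisions : ∀ a b : α,
      ((univ.filter fun i : ι => g i a = g i b).card : ℝ) ≤ N * ε + if a = b then N else 0 := by
    intro a b
    rcases eq_or_ne a b with rfl | hab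
    · rw [if_pos rfl, filter_true_of_mem fun _ _ => rfl, card_univ]
      have : 0 ≤ N * ε := by positivity
      linarith
    · rw [if_neg hab, add_zero, mul_comm, ← div_le_iff₀ (by positivity)]
      exact huniv a b hab
  calc ∑ i, ∑ y, fiberSum (g i) p y ^ 2
      = ∑ a, ∑ b, p a * p b * ((univ.filter fun i : ι => g i a = g i b).card : ℝ) := by
        simp only [sum_fiberSum_sq]
        rw [Finset.sum_comm]
        refine Finset.sum_congr rfl fun a _ => ?_
        rw [Finset.sum_comm]
        refine Finset.sum_congr rfl fun b _ => ?_
        rw [Finset.card_filter, Nat.cast_sum, Finset.mul_sum]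
        simp
    _ ≤ ∑ a, ∑ b, p a * p b * (N * ε + if a = b then N else 0) := by
        gcongr with a _ b
        · exact mul_nonneg (hp a) (hp b)
        · exact hcollisions a b
    _ = N * (ε * (∑ a, p a) ^ 2 + ∑ a, p a ^ 2) := by
        have hoff : ∑ a, ∑ b, p a * p b * (N * ε) = N * ε * (∑ a, p a) ^ 2 := by
          rw [sq, Finset.sum_mul_sum, Finset.mul_sum]
          refine sum_congr rfl fun a _ => ?_
          rw [Finset.mul_sum]
          exact sum_congr rfl fun b _ => by ring
        have hdiag : ∑ a, ∑ b, p a * p b * (if a = b then N else 0) = N * ∑ a, p a ^ 2 := by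
          simp only [mul_ite, mul_zero, Finset.sum_ite_eq, Finset.mem_univ, if_true, Finset.mul_sum]
          exact sum_congr rfl fun a _ => by ring
        simp only [mul_add, Finset.sum_add_distrib, hoff, hdiag]
        ring

theorem sum_abs_fiberSum_sub_inv_card_le {ι α β : Type*} [Fintype ι] [Nonempty ι] [Fintype α]
    [Nonempty α] [DecidableEq α] [Fintype β] [Nonempty β] [DecidableEq β] (g : ι → α → β)
    (huniv : ∀ a b : α, a ≠ b →
      ((univ.filter fun i : ι => g i a = g i b).card : ℝ) / (Fintype.card ι : ℝ)
        ≤ (Fintype.card β : ℝ)⁻¹)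
    {p : α → ℝ} (hp : ∀ a, 0 ≤ p a) (hs : ∑ a, p a = 1) :
    ∑ y, ∑ i, |(1 / (Fintype.card ι : ℝ)) * fiberSum (g i) p y
        - (Fintype.card β : ℝ)⁻¹ * (1 / (Fintype.card ι : ℝ))|
      ≤ √(Fintype.card β * univ.sup' univ_nonempty p) := by
  set N : ℝ := (Fintype.card ι : ℝ) with hN
  set K : ℝ := (Fintype.card β : ℝ)
  set M := univ.sup' univ_nonempty p
  have hN0 : 0 < N := by positivity
  set P : β × ι → ℝ := fun z => (1 / N) * fiberSum (g z.2) p z.1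
  have hcard : (Fintype.card (β × ι) : ℝ) = K * N := by simp [Fintype.card_prod, hN, K]
  have hP : ∑ z, P z = 1 := by
    simp only [P, Fintype.sum_prod_type_right, ← Finset.mul_sum, sum_fiberSum, hs, sum_const,
      card_univ, nsmul_eq_mul, mul_one]
    exact one_div_mul_cancel hN0.ne'
  have hcoll : ∑ i, ∑ y, fiberSum (g i) p y ^ 2 ≤ N * (K⁻¹ + M) := by
    have hq := sum_sum_fiberSum_sq_le g (by positivity) huniv hp
    have hmax : ∑ a, p a ^ 2 ≤ M := by simpa only [hs, mul_one] using sum_sq_le_sup'_mul_sum hp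
    rw [hs, one_pow, mul_one, ← hN] at hq
    exact hq.trans (by gcongr)
  calc _ = ∑ z, |P z - (Fintype.card (β × ι) : ℝ)⁻¹| := by
        rw [hcard, Fintype.sum_prod_type, mul_inv, ← one_div N]
    _ ≤ √(Fintype.card (β × ι) * ∑ z, P z ^ 2 - 1) := sum_abs_sub_inv_card_le_sqrt P hP
    _ ≤ √(K * M) := by
        gcongr
        simp only [P, Fintype.sum_prod_type_right, mul_pow, ← Finset.mul_sum, hcard]
        calc K * N * ((1 / N) ^ 2 * ∑ i, ∑ y, fiberSum (g i) p y ^ 2) - 1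
            = K * ((∑ i, ∑ y, fiberSum (g i) p y ^ 2) / N) - 1 := by field_simp
          _ ≤ K * (K⁻¹ + M) - 1 := by
            gcongr
            rw [div_le_iff₀ hN0, mul_comm]
            exact hcoll
          _ = K * M := by rw [mul_add, mul_inv_cancel₀ (by positivity)]; ring

theorem stmt_11_general {𝒲 ι : Type*} [Fintype 𝒲] [Fintype ι] [Nonempty 𝒲] [Nonempty ι]
    (l : ℕ) (g : ι → 𝒲 → (Fin l → Bool))
    (huniv : ∀ w w' : 𝒲, w ≠ w' →
      ((Finset.univ.filter (fun i : ι => g i w = g i w')).card : ℝ) / (Fintype.card ι : ℝ)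
        ≤ (2 : ℝ) ^ (-(l : ℝ)))
    (pW : 𝒲 → ℝ) (hp : ∀ w, 0 ≤ pW w) (hs : ∑ w, pW w = 1)
    (Hinf : ℝ) (hH : Hinf = -Real.logb 2 (Finset.univ.sup' Finset.univ_nonempty pW)) :
    (1/2) * ∑ y : Fin l → Bool, ∑ i : ι,
        |(1 / (Fintype.card ι : ℝ)) * (∑ w, if g i w = y then pW w else 0)
          - (2 : ℝ) ^ (-(l : ℝ)) * (1 / (Fintype.card ι : ℝ))|
      ≤ (1/2) * Real.sqrt ((2 : ℝ) ^ ((l : ℝ) - Hinf)) := by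
  classical
  have hcard : ((2 : ℝ) ^ (-(l : ℝ))) = (Fintype.card (Fin l → Bool) : ℝ)⁻¹ := by
    simp [Real.rpow_neg, Real.rpow_natCast]
  have hmax : 0 < univ.sup' univ_nonempty pW := by
    obtain ⟨w, -, hw⟩ := exists_lt_of_sum_lt (s := univ) (f := fun _ => (0 : ℝ)) (g := pW)
      (by simp [hs])
    exact hw.trans_le (le_sup' pW (mem_univ w))
  rw [hcard] at huniv ⊢
  calc _ ≤ (1/2) * √(Fintype.card (Fin l → Bool) * univ.sup' univ_nonempty pW) := by
        gcongr
        exact sum_abs_fiberSum_sub_inv_card_le g huniv hp hs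
    _ = (1/2) * √((2 : ℝ) ^ ((l : ℝ) - Hinf)) := by
        rw [hH, sub_neg_eq_add, Real.rpow_add two_pos, Real.rpow_natCast,
          Real.rpow_logb two_pos (by norm_num) hmax]
        simp

/-- Leftover hash lemma: for a 2-universal family 𝒢 = {g i} of hash functions
𝒲 → {0,1}^l, G uniform on the index set ι independent of W ~ pW, and U_l uniform
on {0,1}^l, the statistical distance between (G(W), G) and (U_l, G) is at most
(1/2)·√(2^{l - H∞(W)}). -/
theorem stmt_11 {𝒲 ι : Type*} [Fintype 𝒲] [Fintype ι] [Nonempty 𝒲] [Nonempty ι]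
    [DecidableEq 𝒲]
    (l : ℕ) (g : ι → 𝒲 → (Fin l → Bool))
    (huniv : ∀ w w' : 𝒲, w ≠ w' →
      ((Finset.univ.filter (fun i : ι => g i w = g i w')).card : ℝ) / (Fintype.card ι : ℝ)
        ≤ (2 : ℝ) ^ (-(l : ℝ)))
    (pW : 𝒲 → ℝ) (hp : ∀ w, 0 ≤ pW w) (hs : ∑ w, pW w = 1)
    (Hinf : ℝ) (hH : Hinf = -Real.logb 2 (Finset.univ.sup' Finset.univ_nonempty pW)) :
    (1/2) * ∑ y : Fin l → Bool, ∑ i : ι,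
        |(1 / (Fintype.card ι : ℝ)) * (∑ w, if g i w = y then pW w else 0)
          - (2 : ℝ) ^ (-(l : ℝ)) * (1 / (Fintype.card ι : ℝ))|
      ≤ (1/2) * Real.sqrt ((2 : ℝ) ^ ((l : ℝ) - Hinf)) :=
  stmt_11_general l g huniv pW hp hs Hinf hH
end
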